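/- arXiv:1703.04806 — 2 statements merged into one kernel-verified Lean document; each statement's English description precedes it below -/
import Mathlib

section
/- Let T₁ = (S₁,Σ₁,κ₁) and T₂ = (S₂,Σ₂,κ₂) be STSs and α : S₁ → S₂ measurable, with T₂ an α-abstraction of T₁. If T₁ is decisive w.r.t. every α-closed set from every initial probability measure (for every B ∈ Σ₂ and every probability measure μ on S₁, Prob^{T₁}_μ(F α⁻¹(B) ∪ F C̃) = 1, where C̃ is the avoid-set of α⁻¹(B) in T₁), then T₂ is a sound α-abstraction of T₁: for every probability measure μ on S₁ and every B ∈ Σ₂, Prob^{T₂}_{α_# μ}(F B) = 1 implies Prob^{T₁}_μ(F α⁻¹(B)) = 1. -/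
open MeasureTheory ProbabilityTheory ENNReal Filter Topology

namespace STS

variable {S : Type*} [MeasurableSpace S]

/-- Probability of the cylinder `Cyl(A 0, …, A n)` for the Markov chain with kernel `κ`
and initial distribution `μ`. -/
noncomputable def cylProb (κ : Kernel S S) : ℕ → Measure S → (ℕ → Set S) → ℝ≥0∞
  | 0, μ, A => μ (A 0)
  | n + 1, μ, A => ∫⁻ s in A 0, cylProb κ n (κ s) (fun i => A (i + 1)) ∂μ

/-- `P` assigns to each initial (probability) distribution the path measure (on `ℕ → S`,
with the product σ-algebra) of the time-homogeneous Markov chain with transition kernel `κ`,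
as given by the Ionescu–Tulcea construction: it is the unique probability measure giving
cylinders their prescribed probabilities. -/
def IsPathMeasure (κ : Kernel S S) (P : Measure S → Measure (ℕ → S)) : Prop :=
  ∀ μ : Measure S, IsProbabilityMeasure μ →
    IsProbabilityMeasure (P μ) ∧
    ∀ (n : ℕ) (A : ℕ → Set S), (∀ i, MeasurableSet (A i)) →
      P μ {ρ | ∀ i ≤ n, ρ i ∈ A i} = cylProb κ n μ A

/-- The path event `F B`: eventually reach `B`. -/
def evF (B : Set S) : Set (ℕ → S) := {ρ | ∃ k, ρ k ∈ B}

/-- The path event `F≤n B`. -/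
def evFle (n : ℕ) (B : Set S) : Set (ℕ → S) := {ρ | ∃ k ≤ n, ρ k ∈ B}

/-- The path event `F≥p B`. -/
def evFge (p : ℕ) (B : Set S) : Set (ℕ → S) := {ρ | ∃ k, p ≤ k ∧ ρ k ∈ B}

/-- The path event `GF B`: visit `B` infinitely often. -/
def evGF (B : Set S) : Set (ℕ → S) := {ρ | ∀ n, ∃ k, n ≤ k ∧ ρ k ∈ B}

/-- The path event `FG B`: eventually stay in `B` forever. -/
def evFG (B : Set S) : Set (ℕ → S) := {ρ | ∃ n, ∀ k, n ≤ k → ρ k ∈ B}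

/-- The until event `B' U B`. -/
def evU (B' B : Set S) : Set (ℕ → S) := {ρ | ∃ k, ρ k ∈ B ∧ ∀ j < k, ρ j ∈ B'}

/-- The bounded until event `B' U≤n B`. -/
def evUle (n : ℕ) (B' B : Set S) : Set (ℕ → S) := {ρ | ∃ k ≤ n, ρ k ∈ B ∧ ∀ j < k, ρ j ∈ B'}

/-- The avoid-set `B̃` of `B`: states from which `B` is reached with probability `0`. -/
def avoid (P : Measure S → Measure (ℕ → S)) (B : Set S) : Set S :=
  {s | P (Measure.dirac s) (evF B) = 0}

/-- `T` is decisive w.r.t. `B` from `μ`. -/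
def Decisive (P : Measure S → Measure (ℕ → S)) (μ : Measure S) (B : Set S) : Prop :=
  P μ (evF B ∪ evF (avoid P B)) = 1

/-- `T` is strongly decisive w.r.t. `B` from `μ`. -/
def StronglyDecisive (P : Measure S → Measure (ℕ → S)) (μ : Measure S) (B : Set S) : Prop :=
  P μ (evGF B ∪ evF (avoid P B)) = 1

/-- `T` is persistently decisive w.r.t. `B` from `μ`. -/
def PersistentlyDecisive (P : Measure S → Measure (ℕ → S)) (μ : Measure S) (B : Set S) : Prop :=
  ∀ p : ℕ, P μ (evFge p B ∪ evFge p (avoid P B)) = 1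

/-- `PreProb(B)`: measurable sets `B'` from which `B` is reached in one step with positive
probability, whatever the initial distribution concentrated on `B'`. -/
def PreProb (P : Measure S → Measure (ℕ → S)) (B : Set S) : Set (Set S) :=
  {B' | MeasurableSet B' ∧ ∀ μ' : Measure S, IsProbabilityMeasure μ' → μ' B' = 1 →
    0 < P μ' {ρ | ρ 0 ∈ B' ∧ ρ 1 ∈ B}}

/-- `T` is fair w.r.t. `B` from `μ`. -/
def Fair (P : Measure S → Measure (ℕ → S)) (μ : Measure S) (B : Set S) : Prop :=
  ∀ B' ∈ PreProb P B, 0 < P μ (evGF B') →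
    P μ (evGF B ∩ evGF B') = P μ (evGF B')

/-- The one-step measure transformer `Ω_T`. -/
noncomputable def Omega (κ : Kernel S S) (μ : Measure S) : Measure S :=
  μ.bind (fun s => κ s)

/-- Two measures are qualitatively equivalent if they have the same null (measurable) sets. -/
def QualEquiv {T : Type*} [MeasurableSpace T] (μ ν : Measure T) : Prop :=
  ∀ A : Set T, MeasurableSet A → (μ A = 0 ↔ ν A = 0)

/-- `T₂ = (S₂,κ₂)` is an `α`-abstraction of `T₁ = (S₁,κ₁)`. -/
def IsAbstraction {S₁ S₂ : Type*} [MeasurableSpace S₁] [MeasurableSpace S₂]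
    (κ₁ : Kernel S₁ S₁) (κ₂ : Kernel S₂ S₂) (α : S₁ → S₂) : Prop :=
  ∀ μ : Measure S₁, IsProbabilityMeasure μ →
    QualEquiv (Measure.map α (Omega κ₁ μ)) (Omega κ₂ (Measure.map α μ))

/-!
Let `C = α ⁻¹' B` and suppose `P₁ μ (F C) < 1`. By decisiveness, with positive probability the
concrete chain enters the avoid-set `C̃` at some time `n` without having visited `C`; that is,
the law at time `n` of the chain killed on entering `C` charges `C̃`. Qualitative equivalence
survives the one-step transformer, restriction to `α`-closed sets and finite rescaling, so the
abstraction relates these killed laws and the iterated laws of the two chains null set for null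
set. The part of the concrete killed law sitting in `C̃` never reaches `C`, so its image never
reaches `B` and therefore lives in `B̃`; hence the abstract chain from `α_# μ` enters `B̃` at
time `n` without having visited `B` with positive probability. From `B̃` the set `B` is almost
surely never reached, contradicting `P₂ (α_# μ) (F B) = 1`.
-/

section Cylinders

variable {κ : Kernel S S}

lemma pow_zero_comp (κ : Kernel S S) (μ : Measure S) : ⇑(κ ^ 0) ∘ₘ μ = μ := Measure.id_comp

lemma pow_succ_comp (κ : Kernel S S) (n : ℕ) (μ : Measure S) :
    ⇑(κ ^ (n + 1)) ∘ₘ μ = ⇑(κ ^ n) ∘ₘ (κ ∘ₘ μ) := by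
  rw [Measure.comp_assoc, pow_succ]
  rfl

/-- The law at time `n` of the chain started from `μ` and killed on leaving `E`: its mass is that
of the paths staying in `E` at all times `< n`. -/
noncomputable def killedLaw (κ : Kernel S S) (E : Set S) (n : ℕ) (μ : Measure S) : Measure S :=
  (fun ν => κ ∘ₘ ν.restrict E)^[n] μ

lemma killedLaw_succ (E : Set S) (n : ℕ) (μ : Measure S) :
    killedLaw κ E (n + 1) μ = κ ∘ₘ (killedLaw κ E n μ).restrict E :=
  Function.iterate_succ_apply' _ n μ

lemma killedLaw_succ' (E : Set S) (n : ℕ) (μ : Measure S) :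
    killedLaw κ E (n + 1) μ = killedLaw κ E n (κ ∘ₘ μ.restrict E) :=
  Function.iterate_succ_apply _ n μ

lemma killedLaw_univ (n : ℕ) (μ : Measure S) : killedLaw κ Set.univ n μ = (κ ^ n) ∘ₘ μ := by
  induction n with
  | zero => exact (pow_zero_comp κ μ).symm
  | succ n ih =>
    rw [killedLaw_succ, Measure.restrict_univ, ih, Measure.comp_assoc, pow_succ']
    rfl

instance isFiniteMeasure_killedLaw [IsFiniteKernel κ] (E : Set S) (n : ℕ) (μ : Measure S)
    [IsFiniteMeasure μ] : IsFiniteMeasure (killedLaw κ E n μ) := by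
  induction n with
  | zero => assumption
  | succ n ih => rw [killedLaw_succ]; infer_instance

/-- `cylProbFrom κ n A s = cylProb κ n (dirac s) A`, the integrand of `cylProb κ n μ A`. -/
noncomputable def cylProbFrom (κ : Kernel S S) : ℕ → (ℕ → Set S) → S → ℝ≥0∞
  | 0, A => (A 0).indicator 1
  | n + 1, A => (A 0).indicator fun s => ∫⁻ t, cylProbFrom κ n (fun i => A (i + 1)) t ∂κ s

lemma measurable_cylProbFrom (n : ℕ) {A : ℕ → Set S} (hA : ∀ i, MeasurableSet (A i)) :
    Measurable (cylProbFrom κ n A) := by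
  induction n generalizing A with
  | zero => exact measurable_one.indicator (hA 0)
  | succ n ih => exact (ih fun i => hA (i + 1)).lintegral_kernel.indicator (hA 0)

lemma cylProb_eq_lintegral (n : ℕ) (μ : Measure S) {A : ℕ → Set S}
    (hA : ∀ i, MeasurableSet (A i)) : cylProb κ n μ A = ∫⁻ s, cylProbFrom κ n A s ∂μ := by
  induction n generalizing μ A with
  | zero => rw [cylProb, cylProbFrom, lintegral_indicator_one (hA 0)]
  | succ n ih =>
    rw [cylProb, cylProbFrom, lintegral_indicator (hA 0)]
    exact lintegral_congr fun s => ih (κ s) fun i => hA (i + 1)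

lemma cylProb_succ (n : ℕ) (μ : Measure S) {A : ℕ → Set S} (hA : ∀ i, MeasurableSet (A i)) :
    cylProb κ (n + 1) μ A = cylProb κ n (κ ∘ₘ μ.restrict (A 0)) (fun i => A (i + 1)) := by
  have hA' : ∀ i, MeasurableSet (A (i + 1)) := fun i => hA (i + 1)
  rw [cylProb_eq_lintegral n _ hA', Measure.lintegral_bind κ.aemeasurable
    (measurable_cylProbFrom n hA').aemeasurable, cylProb]
  exact lintegral_congr fun s => cylProb_eq_lintegral n (κ s) hA'

lemma cylProb_add_of_prefix (E : Set S) (n m : ℕ) (μ : Measure S) {A : ℕ → Set S}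
    (hA : ∀ i, MeasurableSet (A i)) (hpre : ∀ i < n, A i = E) :
    cylProb κ (n + m) μ A = cylProb κ m (killedLaw κ E n μ) (fun i => A (i + n)) := by
  induction n generalizing μ A with
  | zero => rw [Nat.zero_add]; rfl
  | succ n ih =>
    rw [show n + 1 + m = n + m + 1 by omega, cylProb_succ _ _ hA, hpre 0 n.succ_pos,
      ih _ (fun i => hA (i + 1)) (fun i hi => hpre (i + 1) (by omega)), killedLaw_succ']
    rfl

end Cylinders

lemma evF_eq_iUnion {T : Type*} (B : Set T) : evF B = ⋃ k, {ρ : ℕ → T | ρ k ∈ B} := by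
  ext ρ
  simp [evF]

lemma measurableSet_evF {B : Set S} (hB : MeasurableSet B) : MeasurableSet (evF B) := by
  rw [evF_eq_iUnion]
  exact .iUnion fun k => measurable_pi_apply k hB

namespace IsPathMeasure

variable {κ : Kernel S S} {P : Measure S → Measure (ℕ → S)}

lemma apply_killed (hP : IsPathMeasure κ P) (μ : Measure S) [IsProbabilityMeasure μ]
    {E A : Set S} (hE : MeasurableSet E) (hA : MeasurableSet A) (n : ℕ) :
    P μ {ρ | (∀ i < n, ρ i ∈ E) ∧ ρ n ∈ A} = killedLaw κ E n μ A := by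
  set A' : ℕ → Set S := fun i => if i < n then E else A
  have hA' : ∀ i, MeasurableSet (A' i) := fun i => by dsimp only [A']; split_ifs <;> assumption
  have hcyl : {ρ : ℕ → S | (∀ i < n, ρ i ∈ E) ∧ ρ n ∈ A} = {ρ | ∀ i ≤ n, ρ i ∈ A' i} := by
    ext ρ
    simp only [Set.mem_ofPred_eq, A']
    refine ⟨fun ⟨hlt, hn⟩ i hi => ?_, fun h => ⟨fun i hi => ?_, ?_⟩⟩
    · split_ifs with h
      exacts [hlt i h, by rwa [show i = n by omega]]
    · simpa [hi] using h i hi.le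
    · simpa using h n le_rfl
  rw [hcyl, (hP μ ‹_›).2 n A' hA', ← n.add_zero,
    cylProb_add_of_prefix E n 0 μ hA' fun i hi => if_pos hi]
  simp [cylProb, A']

lemma apply_coord (hP : IsPathMeasure κ P) (μ : Measure S) [IsProbabilityMeasure μ]
    {B : Set S} (hB : MeasurableSet B) (k : ℕ) :
    P μ {ρ | ρ k ∈ B} = ((κ ^ k) ∘ₘ μ) B := by
  simpa [killedLaw_univ] using hP.apply_killed μ MeasurableSet.univ hB k

lemma apply_coord_coord (hP : IsPathMeasure κ P) (μ : Measure S) [IsProbabilityMeasure μ]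
    {A B : Set S} (hA : MeasurableSet A) (hB : MeasurableSet B) (n k : ℕ) :
    P μ {ρ | ρ n ∈ A ∧ ρ (n + k) ∈ B} = ((κ ^ k) ∘ₘ ((κ ^ n) ∘ₘ μ).restrict A) B := by
  set A' : ℕ → Set S := fun i => (if i = n then A else .univ) ∩ (if i = n + k then B else .univ)
  have hA' : ∀ i, MeasurableSet (A' i) := fun i => by
    dsimp only [A']; split_ifs <;> simp [hA, hB]
  have hcyl : {ρ : ℕ → S | ρ n ∈ A ∧ ρ (n + k) ∈ B} = {ρ | ∀ i ≤ n + k, ρ i ∈ A' i} := by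
    ext ρ
    simp only [Set.mem_ofPred_eq, A']
    refine ⟨fun ⟨hn, hnk⟩ i _ => ⟨?_, ?_⟩, fun h => ⟨?_, ?_⟩⟩
    · split_ifs with h
      exacts [h ▸ hn, trivial]
    · split_ifs with h
      exacts [h ▸ hnk, trivial]
    · simpa using (h n (by omega)).1
    · simpa using (h (n + k) le_rfl).2
  rw [hcyl, (hP μ ‹_›).2 _ A' hA', cylProb_add_of_prefix .univ n k μ hA' fun i hi => by
    simp [A', show i ≠ n by omega, show i ≠ n + k by omega], killedLaw_univ]
  cases k with
  | zero =>
    rw [pow_zero_comp, Measure.restrict_apply hB]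
    simp [cylProb, A', Set.inter_comm]
  | succ k =>
    rw [cylProb_succ _ _ fun i => hA' (i + n), ← k.add_zero,
      cylProb_add_of_prefix .univ k 0 _ (fun i => hA' (i + 1 + n)) fun i hi => by
        simp [A', show i + 1 + n ≠ n + (k + 1) by omega],
      killedLaw_univ, ← pow_succ_comp]
    simp [cylProb, A', Nat.add_comm (k + 1) n]

lemma avoid_eq (hP : IsPathMeasure κ P) {B : Set S} (hB : MeasurableSet B) :
    avoid P B = ⋂ k, {s | (κ ^ k) s B = 0} := by
  ext s
  simp only [avoid, Set.mem_ofPred_eq, Set.mem_iInter, evF_eq_iUnion, measure_iUnion_null_iff,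
    hP.apply_coord _ hB, Measure.dirac_bind (Kernel.measurable _)]

lemma measurableSet_avoid (hP : IsPathMeasure κ P) {B : Set S} (hB : MeasurableSet B) :
    MeasurableSet (avoid P B) := by
  rw [hP.avoid_eq hB]
  exact .iInter fun k => Kernel.measurable_coe _ hB (measurableSet_singleton 0)

lemma forall_comp_pow_apply_eq_zero_iff (hP : IsPathMeasure κ P) (ν : Measure S) {B : Set S}
    (hB : MeasurableSet B) : (∀ k : ℕ, (⇑(κ ^ k) ∘ₘ ν) B = 0) ↔ ν (avoid P B)ᶜ = 0 := by
  have hstep (k : ℕ) : (⇑(κ ^ k) ∘ₘ ν) B = 0 ↔ ∀ᵐ s ∂ν, (κ ^ k) s B = 0 := by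
    rw [Measure.bind_apply hB (Kernel.aemeasurable _),
      lintegral_eq_zero_iff (Kernel.measurable_coe _ hB)]
    rfl
  rw [forall_congr' hstep, hP.avoid_eq hB, ← mem_ae_iff, countable_iInter_mem]
  rfl

lemma apply_coord_avoid_coord_eq_zero (hP : IsPathMeasure κ P) (μ : Measure S)
    [IsProbabilityMeasure μ] {B : Set S} (hB : MeasurableSet B) (n k : ℕ) :
    P μ {ρ | ρ n ∈ avoid P B ∧ ρ (n + k) ∈ B} = 0 := by
  have hAv := hP.measurableSet_avoid hB
  rw [hP.apply_coord_coord μ hAv hB, (hP.forall_comp_pow_apply_eq_zero_iff _ hB).mpr]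
  rw [Measure.restrict_apply hAv.compl, Set.compl_inter_self, measure_empty]

lemma killedLaw_avoid_eq_zero (hP : IsPathMeasure κ P) (μ : Measure S) [IsProbabilityMeasure μ]
    {B : Set S} (hB : MeasurableSet B) (hreach : P μ (evF B) = 1) (n : ℕ) :
    killedLaw κ Bᶜ n μ (avoid P B) = 0 := by
  have := (hP μ ‹_›).1
  rw [← hP.apply_killed μ hB.compl (hP.measurableSet_avoid hB)]
  refine measure_mono_null (t := (evF B)ᶜ ∪ ⋃ k, {ρ | ρ n ∈ avoid P B ∧ ρ (n + k) ∈ B})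
    ?_ (measure_union_null ((prob_compl_eq_zero_iff (measurableSet_evF hB)).mpr hreach)
      (measure_iUnion_null fun k => hP.apply_coord_avoid_coord_eq_zero μ hB n k))
  rintro ρ ⟨hbefore, havoid⟩
  by_cases hρ : ρ ∈ evF B
  · obtain ⟨j, hj⟩ := hρ
    have hnj : n ≤ j := not_lt.mp fun hjn => hbefore j hjn hj
    exact Or.inr (Set.mem_iUnion.mpr ⟨j - n, havoid, by rwa [Nat.add_sub_cancel' hnj]⟩)
  · exact Or.inl hρ

lemma exists_killedLaw_ne_zero (hP : IsPathMeasure κ P) (μ : Measure S) [IsProbabilityMeasure μ]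
    {A E : Set S} (hA : MeasurableSet A) (hE : MeasurableSet E)
    (h : P μ (evF A \ evF E) ≠ 0) : ∃ n, killedLaw κ Eᶜ n μ A ≠ 0 := by
  by_contra! hzero
  refine h (measure_mono_null (t := ⋃ n, {ρ | (∀ i < n, ρ i ∈ Eᶜ) ∧ ρ n ∈ A}) ?_
    (measure_iUnion_null fun n => (hP.apply_killed μ hE.compl hA n).trans (hzero n)))
  rintro ρ ⟨⟨n, hn⟩, hnever⟩
  exact Set.mem_iUnion.mpr ⟨n, fun i _ hi => hnever ⟨i, hi⟩, hn⟩

end IsPathMeasure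

namespace QualEquiv

variable {T : Type*} [MeasurableSpace T] {μ ν ξ : Measure T}

lemma trans (h₁ : QualEquiv μ ν) (h₂ : QualEquiv ν ξ) : QualEquiv μ ξ :=
  fun A hA => (h₁ A hA).trans (h₂ A hA)

lemma smul (h : QualEquiv μ ν) {c : ℝ≥0∞} (hc : c ≠ 0) : QualEquiv (c • μ) (c • ν) := by
  intro A hA
  simp only [Measure.smul_apply, smul_eq_mul, mul_eq_zero, hc, false_or, h A hA]

lemma restrict (h : QualEquiv μ ν) {E : Set T} (hE : MeasurableSet E) :
    QualEquiv (μ.restrict E) (ν.restrict E) := fun A hA => by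
  simpa only [Measure.restrict_apply hA] using h _ (hA.inter hE)

lemma comp (h : QualEquiv μ ν) (κ : Kernel T T) : QualEquiv (κ ∘ₘ μ) (κ ∘ₘ ν) := by
  intro A hA
  simp only [Measure.bind_apply hA κ.aemeasurable, lintegral_eq_zero_iff (κ.measurable_coe hA),
    Filter.EventuallyEq, ae_iff, Pi.zero_apply]
  exact h _ (κ.measurable_coe hA (measurableSet_singleton 0).compl)

end QualEquiv

namespace IsAbstraction

variable {S₁ S₂ : Type*} [MeasurableSpace S₁] [MeasurableSpace S₂]
  {κ₁ : Kernel S₁ S₁} {κ₂ : Kernel S₂ S₂} {α : S₁ → S₂}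

lemma qualEquiv_of_isFiniteMeasure (habs : IsAbstraction κ₁ κ₂ α) (m : Measure S₁)
    [IsFiniteMeasure m] : QualEquiv ((Omega κ₁ m).map α) (Omega κ₂ (m.map α)) := by
  obtain rfl | hm := eq_or_ne m 0
  · simp only [Omega, Measure.map_zero, Measure.bind_zero_left]
    exact fun _ _ => Iff.rfl
  set c := m Set.univ
  have hc : c ≠ 0 := Measure.measure_univ_ne_zero.mpr hm
  have hp : IsProbabilityMeasure (c⁻¹ • m) :=
    ⟨by rw [Measure.smul_apply, smul_eq_mul, ENNReal.inv_mul_cancel hc (measure_ne_top m _)]⟩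
  have hm_eq : c • c⁻¹ • m = m := by
    rw [smul_smul, ENNReal.mul_inv_cancel hc (measure_ne_top m _), one_smul]
  have := (habs _ hp).smul hc
  rwa [Omega, Omega, ← Measure.map_smul, ← Measure.bind_smul, ← Measure.bind_smul,
    ← Measure.map_smul, hm_eq] at this

lemma qualEquiv_killedLaw [IsFiniteKernel κ₁] (habs : IsAbstraction κ₁ κ₂ α) (hα : Measurable α)
    {E : Set S₂} (hE : MeasurableSet E) (m : Measure S₁) [IsFiniteMeasure m] (n : ℕ) :
    QualEquiv ((killedLaw κ₁ (α ⁻¹' E) n m).map α) (killedLaw κ₂ E n (m.map α)) := by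
  induction n with
  | zero => exact fun _ _ => Iff.rfl
  | succ n ih =>
    rw [killedLaw_succ, killedLaw_succ]
    refine (habs.qualEquiv_of_isFiniteMeasure _).trans ?_
    rw [← Measure.restrict_map hα hE]
    exact (ih.restrict hE).comp κ₂

lemma qualEquiv_comp_pow [IsFiniteKernel κ₁] (habs : IsAbstraction κ₁ κ₂ α) (hα : Measurable α)
    (m : Measure S₁) [IsFiniteMeasure m] (n : ℕ) :
    QualEquiv ((⇑(κ₁ ^ n) ∘ₘ m).map α) (⇑(κ₂ ^ n) ∘ₘ m.map α) := by
  simpa only [Set.preimage_univ, killedLaw_univ] using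
    habs.qualEquiv_killedLaw hα MeasurableSet.univ m n

lemma null_compl_avoid_iff [IsFiniteKernel κ₁] (habs : IsAbstraction κ₁ κ₂ α) (hα : Measurable α)
    {P₁ : Measure S₁ → Measure (ℕ → S₁)} (hP₁ : IsPathMeasure κ₁ P₁)
    {P₂ : Measure S₂ → Measure (ℕ → S₂)} (hP₂ : IsPathMeasure κ₂ P₂)
    {B : Set S₂} (hB : MeasurableSet B) (m : Measure S₁) [IsFiniteMeasure m] :
    m (avoid P₁ (α ⁻¹' B))ᶜ = 0 ↔ m.map α (avoid P₂ B)ᶜ = 0 := by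
  rw [← hP₁.forall_comp_pow_apply_eq_zero_iff m (hα hB),
    ← hP₂.forall_comp_pow_apply_eq_zero_iff _ hB]
  refine forall_congr' fun n => ?_
  rw [← Measure.map_apply hα hB]
  exact habs.qualEquiv_comp_pow hα m n B hB

end IsAbstraction

theorem statement_14_general {S₁ S₂ : Type*} [MeasurableSpace S₁] [MeasurableSpace S₂]
    (κ₁ : Kernel S₁ S₁) [IsMarkovKernel κ₁] (κ₂ : Kernel S₂ S₂)
    (P₁ : Measure S₁ → Measure (ℕ → S₁)) (hP₁ : IsPathMeasure κ₁ P₁)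
    (P₂ : Measure S₂ → Measure (ℕ → S₂)) (hP₂ : IsPathMeasure κ₂ P₂)
    (α : S₁ → S₂) (hα : Measurable α) (habs : IsAbstraction κ₁ κ₂ α)
    (hdec : ∀ B : Set S₂, MeasurableSet B → ∀ μ : Measure S₁, IsProbabilityMeasure μ →
      Decisive P₁ μ (α ⁻¹' B)) :
    ∀ μ : Measure S₁, IsProbabilityMeasure μ → ∀ B : Set S₂, MeasurableSet B →
      P₂ (μ.map α) (evF B) = 1 → P₁ μ (evF (α ⁻¹' B)) = 1 := by
  intro μ hμ B hB hreach
  by_contra hne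
  have hC : MeasurableSet (α ⁻¹' B) := hα hB
  have hAvC := hP₁.measurableSet_avoid hC
  have hAvB := hP₂.measurableSet_avoid hB
  have hescape : P₁ μ (evF (avoid P₁ (α ⁻¹' B)) \ evF (α ⁻¹' B)) ≠ 0 := fun h =>
    hne <| by rw [← hdec B hB μ hμ, Set.union_comm, measure_congr (union_ae_eq_right.mpr h)]
  obtain ⟨n, hn⟩ := hP₁.exists_killedLaw_ne_zero μ hAvC hC hescape
  set τ := (killedLaw κ₁ (α ⁻¹' B)ᶜ n μ).restrict (avoid P₁ (α ⁻¹' B))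
  have hτ : τ.map α (avoid P₂ B)ᶜ = 0 := (habs.null_compl_avoid_iff hα hP₁ hP₂ hB τ).mp <| by
    rw [Measure.restrict_apply hAvC.compl, Set.compl_inter_self, measure_empty]
  have hn₁ : killedLaw κ₁ (α ⁻¹' B)ᶜ n μ (α ⁻¹' avoid P₂ B) ≠ 0 := by
    rw [Measure.map_apply hα hAvB.compl, Set.preimage_compl, ← ae_eq_univ] at hτ
    refine fun h => hn ?_
    rw [← Measure.restrict_apply_univ, ← measure_congr hτ]
    exact nonpos_iff_eq_zero.mp (h ▸ Measure.restrict_apply_le _ _)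
  have hn₂ : killedLaw κ₂ Bᶜ n (μ.map α) (avoid P₂ B) ≠ 0 := by
    have h := habs.qualEquiv_killedLaw hα hB.compl μ n _ hAvB
    rw [Measure.map_apply hα hAvB] at h
    exact fun h0 => hn₁ (h.mpr h0)
  have := Measure.isProbabilityMeasure_map (μ := μ) hα.aemeasurable
  exact hn₂ (hP₂.killedLaw_avoid_eq_zero _ hB hreach n)

/-- if `T₁` is decisive w.r.t. every `α`-closed set from every initial
probability measure, then `T₂` is a sound `α`-abstraction of `T₁`. -/
theorem statement_14 {S₁ S₂ : Type*} [MeasurableSpace S₁] [MeasurableSpace S₂]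
    (κ₁ : Kernel S₁ S₁) [IsMarkovKernel κ₁] (κ₂ : Kernel S₂ S₂) [IsMarkovKernel κ₂]
    (P₁ : Measure S₁ → Measure (ℕ → S₁)) (hP₁ : IsPathMeasure κ₁ P₁)
    (P₂ : Measure S₂ → Measure (ℕ → S₂)) (hP₂ : IsPathMeasure κ₂ P₂)
    (α : S₁ → S₂) (hα : Measurable α) (habs : IsAbstraction κ₁ κ₂ α)
    (hdec : ∀ B : Set S₂, MeasurableSet B → ∀ μ : Measure S₁, IsProbabilityMeasure μ →
      Decisive P₁ μ (α ⁻¹' B)) :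
    ∀ μ : Measure S₁, IsProbabilityMeasure μ → ∀ B : Set S₂, MeasurableSet B →
      P₂ (μ.map α) (evF B) = 1 → P₁ μ (evF (α ⁻¹' B)) = 1 :=
  statement_14_general κ₁ κ₂ P₁ hP₁ P₂ hP₂ α hα habs hdec

end STS
end

section
/- Let T = (S,Σ,κ,AP,L) be a labelled STS and M = (Q,q₀,E,𝓕) a deterministic Muller automaton over AP, and let T ⋉ M be the product STS on S × Q. If A ∈ Σ is an attractor for T, then A × Q is an attractor for T ⋉ M: for every initial probability measure ν on S × Q, Prob^{T⋉M}_ν(F (A × Q)) = 1. -/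
open MeasureTheory ProbabilityTheory ENNReal Filter Topology

namespace STS

variable {S : Type*} [MeasurableSpace S]

/-! By determinism and completeness of `M`, the product kernel pushes forward to `κ` under the
projection `S × Q → S`. Hence every cylinder `{ρ | ∀ i ≤ n, ρ i ∈ Aᶜ × Q}` of `T ⋉ M` has the
probability of the cylinder `{ρ | ∀ i ≤ n, ρ i ∈ Aᶜ}` of `T` from the marginal initial law, and
by continuity from above so does the event of avoiding `A × Q` forever, which is null since `A`
is an attractor. -/

lemma measurable_cylProb (κ : Kernel S S) [IsSFiniteKernel κ] (n : ℕ) (A : ℕ → Set S)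
    (hA : ∀ i, MeasurableSet (A i)) :
    Measurable fun s => cylProb κ n (κ s) A := by
  induction n generalizing A with
  | zero => exact κ.measurable_coe (hA 0)
  | succ n ih => exact (ih _ fun i => hA (i + 1)).setLIntegral_kernel (hA 0)

lemma measurableSet_cylinder {A : ℕ → Set S} (hA : ∀ i, MeasurableSet (A i)) (n : ℕ) :
    MeasurableSet {ρ : ℕ → S | ∀ i ≤ n, ρ i ∈ A i} := by
  simp only [Set.ofPred_forall]
  exact .iInter fun i => .iInter fun _ => measurable_pi_apply i (hA i)

lemma compl_evF {α : Type*} (B : Set α) : (evF B)ᶜ = ⋂ n, {ρ : ℕ → α | ∀ i ≤ n, ρ i ∈ Bᶜ} := by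
  ext ρ
  simp only [evF, Set.mem_compl_iff, Set.mem_ofPred_eq, not_exists, Set.mem_iInter]
  exact ⟨fun h n i _ => h i, fun h i => h i i le_rfl⟩

lemma IsPathMeasure.measure_compl_evF {κ : Kernel S S} {P : Measure S → Measure (ℕ → S)}
    (hP : IsPathMeasure κ P) (μ : Measure S) [IsProbabilityMeasure μ] {B : Set S}
    (hB : MeasurableSet B) :
    P μ (evF B)ᶜ = ⨅ n, cylProb κ n μ (fun _ => Bᶜ) := by
  obtain ⟨hprob, hcyl⟩ := hP μ ‹_›
  have hanti : Antitone fun n => {ρ : ℕ → S | ∀ i ≤ n, ρ i ∈ Bᶜ} :=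
    fun _ _ hmn _ hρ i hi => hρ i (hi.trans hmn)
  rw [compl_evF, hanti.measure_iInter
    (fun n => (measurableSet_cylinder (fun _ => hB.compl) n).nullMeasurableSet)
    ⟨0, measure_ne_top _ _⟩]
  exact iInf_congr fun n => hcyl n _ fun _ => hB.compl

section Factor

variable {S' : Type*} [MeasurableSpace S'] {κ : Kernel S S} {κ' : Kernel S' S'} {f : S' → S}

lemma cylProb_preimage [IsSFiniteKernel κ] (hf : Measurable f)
    (hκ : ∀ x, (κ' x).map f = κ (f x)) (n : ℕ) (ν : Measure S') {C : ℕ → Set S}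
    (hC : ∀ i, MeasurableSet (C i)) :
    cylProb κ' n ν (fun i => f ⁻¹' C i) = cylProb κ n (ν.map f) C := by
  induction n generalizing ν C with
  | zero => exact (Measure.map_apply hf (hC 0)).symm
  | succ n ih =>
      simp only [cylProb]
      rw [setLIntegral_map (hC 0) (measurable_cylProb κ n _ fun i => hC (i + 1)) hf]
      refine lintegral_congr fun x => ?_
      rw [ih (κ' x) fun i => hC (i + 1), hκ]

lemma IsPathMeasure.measure_evF_preimage [IsSFiniteKernel κ] {P : Measure S → Measure (ℕ → S)}
    {P' : Measure S' → Measure (ℕ → S')} (hP' : IsPathMeasure κ' P') (hP : IsPathMeasure κ P)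
    (hf : Measurable f) (hκ : ∀ x, (κ' x).map f = κ (f x)) (ν : Measure S')
    [IsProbabilityMeasure ν] {B : Set S} (hB : MeasurableSet B) :
    P' ν (evF (f ⁻¹' B)) = P (ν.map f) (evF B) := by
  have := Measure.isProbabilityMeasure_map (μ := ν) hf.aemeasurable
  have := (hP' ν ‹_›).1
  have := (hP (ν.map f) ‹_›).1
  have hcompl : P' ν (evF (f ⁻¹' B))ᶜ = P (ν.map f) (evF B)ᶜ := by
    rw [hP'.measure_compl_evF ν (hf hB), hP.measure_compl_evF _ hB]
    exact iInf_congr fun n => cylProb_preimage hf hκ n ν fun _ => hB.compl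
  rw [← compl_compl (evF (f ⁻¹' B)), ← compl_compl (evF B),
    prob_compl_eq_one_sub (measurableSet_evF (hf hB)).compl,
    prob_compl_eq_one_sub (measurableSet_evF hB).compl, hcompl]

end Factor

lemma _root_.MeasureTheory.Measure.map_fst_eq_of_prod_singleton {Q : Type*} [Countable Q]
    [MeasurableSpace Q] [MeasurableSingletonClass Q] {ν : Measure (S × Q)} {μ : Measure S}
    (q₁ : Q) (h₁ : ∀ C, MeasurableSet C → ν (C ×ˢ {q₁}) = μ C)
    (h₀ : ∀ C, MeasurableSet C → ∀ q ≠ q₁, ν (C ×ˢ {q}) = 0) :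
    ν.map Prod.fst = μ := by
  ext C hC
  rw [Measure.map_apply measurable_fst hC, ← Set.prod_univ, ← Set.iUnion_of_singleton Q,
    Set.prod_iUnion,
    measure_iUnion (fun _ _ hqq' => Set.disjoint_prod.2 (.inr (Set.disjoint_singleton.2 hqq')))
      fun q => hC.prod (.singleton q),
    tsum_eq_single q₁ (h₀ C hC)]
  exact h₁ C hC

theorem statement_15_general {S : Type*} [MeasurableSpace S]
    {AP : Type*}
    {Q : Type*} [Finite Q] [MeasurableSpace Q] [MeasurableSingletonClass Q]
    -- the labelled STS `T = (S, Σ, κ, AP, L)` with path measures `P`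
    (κ : Kernel S S) [IsMarkovKernel κ]
    (P : Measure S → Measure (ℕ → S)) (hP : IsPathMeasure κ P)
    (L : S → Set AP)
    -- the deterministic Muller automaton `M = (Q, q₀, E, 𝓕)`
    (E : Set (Q × Set AP × Q))
    (hdet : ∀ q u q₁ q₂, (q, u, q₁) ∈ E → (q, u, q₂) ∈ E → q₁ = q₂)
    (hcomp : ∀ q u, ∃ q', (q, u, q') ∈ E)
    -- the product STS `T ⋉ M` on `S × Q`, with path measures `P'`
    (κ' : Kernel (S × Q) (S × Q))
    (hκ'mem : ∀ (s : S) (q : Q) (C : Set S), MeasurableSet C → ∀ q' : Q,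
      (q, L s, q') ∈ E → κ' (s, q) (C ×ˢ ({q'} : Set Q)) = κ s C)
    (hκ'nmem : ∀ (s : S) (q : Q) (C : Set S), MeasurableSet C → ∀ q' : Q,
      (q, L s, q') ∉ E → κ' (s, q) (C ×ˢ ({q'} : Set Q)) = 0)
    (P' : Measure (S × Q) → Measure (ℕ → S × Q)) (hP' : IsPathMeasure κ' P')
    -- `A` is an attractor for `T`
    (A : Set S) (hA : MeasurableSet A)
    (hattr : ∀ μ : Measure S, IsProbabilityMeasure μ → P μ (evF A) = 1) :
    -- then `A × Q` is an attractor for `T ⋉ M`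
    ∀ ν : Measure (S × Q), IsProbabilityMeasure ν →
      P' ν (evF (A ×ˢ (Set.univ : Set Q))) = 1 := by
  intro ν hν
  have hfst : ∀ x, (κ' x).map Prod.fst = κ x.1 := by
    rintro ⟨s, q⟩
    obtain ⟨q₁, hq₁⟩ := hcomp q (L s)
    exact Measure.map_fst_eq_of_prod_singleton q₁ (fun C hC => hκ'mem s q C hC q₁ hq₁)
      fun C hC q' hq' => hκ'nmem s q C hC q' fun h => hq' (hdet _ _ _ _ h hq₁)
  rw [Set.prod_univ, hP'.measure_evF_preimage hP measurable_fst hfst ν hA]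
  exact hattr _ (Measure.isProbabilityMeasure_map measurable_fst.aemeasurable)

/-- if `A` is an attractor for the labelled STS `T`, then `A × Q` is an
attractor for the product `T ⋉ M` with a deterministic Muller automaton
`M = (Q, q₀, E, 𝓕)`. -/
theorem statement_15 {S : Type*} [MeasurableSpace S]
    {AP : Type*} [Finite AP]
    {Q : Type*} [Finite Q] [MeasurableSpace Q] [MeasurableSingletonClass Q]
    -- the labelled STS `T = (S, Σ, κ, AP, L)` with path measures `P`
    (κ : Kernel S S) [IsMarkovKernel κ]
    (P : Measure S → Measure (ℕ → S)) (hP : IsPathMeasure κ P)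
    (L : S → Set AP) (hL : ∀ u : Set AP, MeasurableSet (L ⁻¹' {u}))
    -- the deterministic Muller automaton `M = (Q, q₀, E, 𝓕)`
    (q₀ : Q) (E : Set (Q × Set AP × Q)) (𝓕 : Set (Set Q))
    (hdet : ∀ q u q₁ q₂, (q, u, q₁) ∈ E → (q, u, q₂) ∈ E → q₁ = q₂)
    (hcomp : ∀ q u, ∃ q', (q, u, q') ∈ E)
    -- the product STS `T ⋉ M` on `S × Q`, with path measures `P'`
    (κ' : Kernel (S × Q) (S × Q)) [IsMarkovKernel κ']
    (hκ'mem : ∀ (s : S) (q : Q) (C : Set S), MeasurableSet C → ∀ q' : Q,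
      (q, L s, q') ∈ E → κ' (s, q) (C ×ˢ ({q'} : Set Q)) = κ s C)
    (hκ'nmem : ∀ (s : S) (q : Q) (C : Set S), MeasurableSet C → ∀ q' : Q,
      (q, L s, q') ∉ E → κ' (s, q) (C ×ˢ ({q'} : Set Q)) = 0)
    (P' : Measure (S × Q) → Measure (ℕ → S × Q)) (hP' : IsPathMeasure κ' P')
    -- `A` is an attractor for `T`
    (A : Set S) (hA : MeasurableSet A)
    (hattr : ∀ μ : Measure S, IsProbabilityMeasure μ → P μ (evF A) = 1) :
    -- then `A × Q` is an attractor for `T ⋉ M`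
    ∀ ν : Measure (S × Q), IsProbabilityMeasure ν →
      P' ν (evF (A ×ˢ (Set.univ : Set Q))) = 1 :=
  statement_15_general κ P hP L E hdet hcomp κ' hκ'mem hκ'nmem P' hP' A hA hattr

end STS
end
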